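/- arXiv:0810.1195 — 2 statements merged into one kernel-verified Lean document; each statement's English description precedes it below -/
import Mathlib

section
/- For every E′ > 0, every n ∈ ℕ₀ and both choices of sign, the function f_n^± is a generalized eigenfunction of the inverted harmonic oscillator with purely imaginary eigenvalue: −½ (f_n^±)''(q) − (E′²/2) q² f_n^±(q) = ±iE′(n + ½) f_n^±(q) for all q ∈ ℝ. -/
open MeasureTheory Filter Complex

/-- Physicists' Hermite polynomials: `H₀ = 1`, `H₁(y) = 2y`,
`H_{n+2}(y) = 2y H_{n+1}(y) − 2(n+1) H_n(y)`. -/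
noncomputable def hermitePoly : ℕ → ℂ → ℂ
  | 0, _ => 1
  | 1, y => 2 * y
  | (n + 2), y => 2 * y * hermitePoly (n + 1) y - 2 * (n + 1) * hermitePoly n y

/-- The generalized (resonance) eigenfunctions of the inverted harmonic
oscillator: `f_n^±(q) = (E′/π)^{1/4} (2ⁿ n!)^{−1/2} e^{±iπ/8} e^{∓i(E′/2)q²}
H_n(e^{±iπ/4} √(E′) q)`, with sign `s = ±1`. -/
noncomputable def fres (E' s : ℝ) (n : ℕ) (q : ℝ) : ℂ :=
  (((E' / Real.pi) ^ ((1 : ℝ) / 4) : ℝ) : ℂ) *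
    (((Real.sqrt (2 ^ n * n.factorial) : ℝ) : ℂ))⁻¹ *
    Complex.exp ((s : ℂ) * Complex.I * (Real.pi : ℂ) / 8) *
    Complex.exp (-(s : ℂ) * Complex.I * ((E' / 2 : ℝ) : ℂ) * (q : ℂ) ^ 2) *
    hermitePoly n (Complex.exp ((s : ℂ) * Complex.I * (Real.pi : ℂ) / 4) *
      ((Real.sqrt E' : ℝ) : ℂ) * (q : ℂ))

/-! The Hermite function `ψₙ(z) = exp(-z²/2) Hₙ(z)` satisfies `ψₙ'' = (z² - (2n + 1)) ψₙ` on all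
of `ℂ`; this is Hermite's equation `Hₙ'' - 2z Hₙ' + 2n Hₙ = 0`. Up to a constant factor,
`f_n^±(q) = ψₙ(b q)` with `b = e^{±iπ/4} √E'`, so `b² = ±iE'` and `b⁴ = -E'²`, and the chain rule
gives `(f_n^±)'' = (b⁴ q² - (2n + 1) b²) f_n^±`, which is the eigenvalue equation. -/

theorem hermitePoly_succ (n : ℕ) (y : ℂ) :
    hermitePoly (n + 1) y = 2 * y * hermitePoly n y - 2 * n * hermitePoly (n - 1) y := by
  cases n with
  | zero => simp [hermitePoly]
  | succ n => simp [hermitePoly]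

-- At `n = 0` the truncated `n - 1` is harmless: its coefficient `2 * n` vanishes.
theorem hasDerivAt_hermitePoly (n : ℕ) (y : ℂ) :
    HasDerivAt (hermitePoly n) (2 * n * hermitePoly (n - 1) y) y := by
  induction n using Nat.strong_induction_on generalizing y with
  | _ n ih =>
    match n with
    | 0 =>
      show HasDerivAt (fun _ => (1 : ℂ)) _ y
      simpa using hasDerivAt_const y (1 : ℂ)
    | 1 =>
      show HasDerivAt (fun y => 2 * y) _ y
      simpa [hermitePoly] using (hasDerivAt_id y).const_mul (2 : ℂ)
    | m + 2 =>
      have hrec : hermitePoly (m + 2) =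
          fun y => 2 * y * hermitePoly (m + 1) y - 2 * (m + 1) * hermitePoly m y := rfl
      rw [hrec]
      refine ((((hasDerivAt_id' y).const_mul 2).mul (ih (m + 1) (by omega) y)).sub
        ((ih m (by omega) y).const_mul (2 * ((m : ℂ) + 1)))).congr_deriv ?_
      push_cast
      linear_combination (-2 * ((m : ℂ) + 1)) * hermitePoly_succ m y

theorem differentiable_hermitePoly (n : ℕ) : Differentiable ℂ (hermitePoly n) :=
  fun y => (hasDerivAt_hermitePoly n y).differentiableAt

theorem deriv_hermitePoly (n : ℕ) :
    deriv (hermitePoly n) = fun y => 2 * n * hermitePoly (n - 1) y :=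
  funext fun y => (hasDerivAt_hermitePoly n y).deriv

theorem hermitePoly_ode (n : ℕ) (y : ℂ) :
    deriv (deriv (hermitePoly n)) y - 2 * y * deriv (hermitePoly n) y
      + 2 * n * hermitePoly n y = 0 := by
  rw [deriv_hermitePoly, deriv_const_mul_field', deriv_hermitePoly]
  cases n with
  | zero => simp
  | succ m =>
    simp only [Nat.add_sub_cancel, Nat.cast_add, Nat.cast_one]
    linear_combination (2 * ((m : ℂ) + 1)) * hermitePoly_succ m y

theorem deriv_deriv_gaussian_mul {f : ℂ → ℂ} (hf : Differentiable ℂ f) (z : ℂ) :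
    deriv (deriv fun z => cexp (-z ^ 2 / 2) * f z) z =
      cexp (-z ^ 2 / 2) * (deriv (deriv f) z - 2 * z * deriv f z + (z ^ 2 - 1) * f z) := by
  have hgauss (z : ℂ) : HasDerivAt (fun z => cexp (-z ^ 2 / 2)) (cexp (-z ^ 2 / 2) * -z) z :=
    (((hasDerivAt_pow 2 z).fun_neg.div_const 2).congr_deriv (by norm_num; ring)).cexp
  have hderiv : deriv (fun z => cexp (-z ^ 2 / 2) * f z) =
      fun z => cexp (-z ^ 2 / 2) * (deriv f z - z * f z) :=
    funext fun z => ((hgauss z).mul (hf z).hasDerivAt).deriv.trans (by ring)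
  rw [hderiv]
  refine (((hgauss z).mul ((hf.deriv z).hasDerivAt.sub
    ((hasDerivAt_id' z).mul (hf z).hasDerivAt))).deriv).trans ?_
  simp only [Pi.sub_apply, Pi.mul_apply]
  ring

noncomputable def hermiteFunction (n : ℕ) (z : ℂ) : ℂ :=
  cexp (-z ^ 2 / 2) * hermitePoly n z

theorem differentiable_hermiteFunction (n : ℕ) : Differentiable ℂ (hermiteFunction n) := by
  have := differentiable_hermitePoly n
  unfold hermiteFunction
  fun_prop

theorem deriv_deriv_hermiteFunction (n : ℕ) (z : ℂ) :
    deriv (deriv (hermiteFunction n)) z = (z ^ 2 - (2 * n + 1)) * hermiteFunction n z := by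
  unfold hermiteFunction
  rw [deriv_deriv_gaussian_mul (differentiable_hermitePoly n)]
  linear_combination cexp (-z ^ 2 / 2) * hermitePoly_ode n z

theorem deriv_deriv_comp_const_mul {𝕜 E : Type*} [NontriviallyNormedField 𝕜]
    [NormedAddCommGroup E] [NormedSpace 𝕜 E] (f : 𝕜 → E) (c x : 𝕜) :
    deriv (deriv fun x => f (c * x)) x = c ^ 2 • deriv (deriv f) (c * x) := by
  have hderiv : deriv (fun x => f (c * x)) = fun x => c • deriv f (c * x) :=
    funext (deriv_comp_mul_left c f)
  rw [hderiv, deriv_fun_const_smul_field, deriv_comp_mul_left, smul_smul, sq]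

theorem deriv_deriv_comp_ofReal {F : ℂ → ℂ} (hF : Differentiable ℂ F) (x : ℝ) :
    deriv (deriv fun x : ℝ => F x) x = deriv (deriv F) x := by
  have hderiv : deriv (fun x : ℝ => F x) = fun x : ℝ => deriv F x :=
    funext fun x => (hF x).hasDerivAt.comp_ofReal.deriv
  rw [hderiv]
  exact (hF.deriv x).hasDerivAt.comp_ofReal.deriv

theorem deriv_deriv_hermiteFunction_comp_mul_ofReal (n : ℕ) (b : ℂ) (x : ℝ) :
    deriv (deriv fun x : ℝ => hermiteFunction n (b * x)) x =
      b ^ 2 * ((b * x) ^ 2 - (2 * n + 1)) * hermiteFunction n (b * x) := by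
  have hdiff : Differentiable ℂ fun z => hermiteFunction n (b * z) :=
    (differentiable_hermiteFunction n).comp (differentiable_id.const_mul b)
  rw [deriv_deriv_comp_ofReal hdiff, deriv_deriv_comp_const_mul, deriv_deriv_hermiteFunction,
    smul_eq_mul, mul_assoc]

theorem exp_mul_I_pi_div_four_sq {s : ℝ} (hs : s = 1 ∨ s = -1) :
    cexp (s * I * Real.pi / 4) ^ 2 = s * I := by
  rw [← Complex.exp_nat_mul]
  rcases hs with rfl | rfl
  · convert exp_pi_div_two_mul_I using 2 <;> push_cast <;> ring
  · convert exp_neg_pi_div_two_mul_I using 2 <;> push_cast <;> ring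

noncomputable def fresScale (E' s : ℝ) : ℂ :=
  cexp (s * I * Real.pi / 4) * Real.sqrt E'

theorem fresScale_sq {E' s : ℝ} (hE' : 0 ≤ E') (hs : s = 1 ∨ s = -1) :
    fresScale E' s ^ 2 = s * I * E' := by
  rw [fresScale, mul_pow, exp_mul_I_pi_div_four_sq hs, ← ofReal_pow, Real.sq_sqrt hE']

theorem fresScale_pow_four {E' s : ℝ} (hE' : 0 ≤ E') (hs : s = 1 ∨ s = -1) :
    fresScale E' s ^ 4 = -E' ^ 2 := by
  have hs2 : (s : ℂ) ^ 2 = 1 := by rcases hs with rfl | rfl <;> norm_num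
  rw [show fresScale E' s ^ 4 = (fresScale E' s ^ 2) ^ 2 by ring, fresScale_sq hE' hs, mul_pow,
    mul_pow, hs2, I_sq]
  ring

theorem fres_eq_const_mul_hermiteFunction {E' s : ℝ} (hE' : 0 ≤ E') (hs : s = 1 ∨ s = -1)
    (n : ℕ) : ∃ C : ℂ, fres E' s n = fun q : ℝ => C * hermiteFunction n (fresScale E' s * q) := by
  refine ⟨((E' / Real.pi) ^ ((1 : ℝ) / 4) : ℝ) * ((Real.sqrt (2 ^ n * n.factorial) : ℝ) : ℂ)⁻¹ *
    cexp (s * I * Real.pi / 8), funext fun q => ?_⟩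
  have hexp : -(s : ℂ) * I * ((E' / 2 : ℝ) : ℂ) * (q : ℂ) ^ 2 = -(fresScale E' s * q) ^ 2 / 2 := by
    rw [mul_pow, fresScale_sq hE' hs]
    push_cast
    ring
  rw [fres, hexp, hermiteFunction, fresScale]
  ring

/-- `f_n^±` is a generalized eigenfunction of the inverted
harmonic oscillator with eigenvalue `±iE′(n + ½)`:
`−½ (f_n^±)'' − (E′²/2) q² f_n^± = ±iE′(n + ½) f_n^±`. -/
theorem fres_eigenfunction (E' : ℝ) (hE' : 0 < E') (n : ℕ) (s : ℝ)
    (hs : s = 1 ∨ s = -1) (q : ℝ) :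
    -(1 / 2 : ℂ) * deriv (deriv (fres E' s n)) q
        - ((E' ^ 2 / 2 : ℝ) : ℂ) * (q : ℂ) ^ 2 * fres E' s n q
      = (s : ℂ) * Complex.I * (E' : ℂ) * ((n : ℂ) + 1 / 2) * fres E' s n q := by
  obtain ⟨C, hfres⟩ := fres_eq_const_mul_hermiteFunction hE'.le hs n
  have hb2 := fresScale_sq hE'.le hs
  have hb4 := fresScale_pow_four hE'.le hs
  rw [hfres]
  simp only [deriv_const_mul_field']
  rw [deriv_deriv_hermiteFunction_comp_mul_ofReal]
  set ψ := hermiteFunction n (fresScale E' s * q)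
  push_cast
  linear_combination (-(C * ψ * q ^ 2) / 2) * hb4 + (C * ψ * (n + 1 / 2)) * hb2
end

section
/- Let E > 0 and fix a sign s ∈ {+1,−1}. If f: ℝ² → ℂ is continuously differentiable and satisfies the pair of first-order equations (∂_t f − ∂_x f)(t,x) = −s·iE(t + x) f(t,x) and (∂_t f + ∂_x f)(t,x) = −s·iE(t − x) f(t,x) for all (t,x) ∈ ℝ², then f(t,x) = f(0,0) e^{−s·iE(t²−x²)/2} for all (t,x). In particular, the simultaneous kernel of the two annihilation operators a₁^{−s}, a₂^{−s} is one-dimensional, spanned by the Gaussian phase e^{−s·iE(t²−x²)/2}. -/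
open MeasureTheory Filter Complex

/-- Partial derivative in the first ("time") variable. -/
noncomputable def dTu (f : ℝ × ℝ → ℂ) (p : ℝ × ℝ) : ℂ := deriv (fun a => f (a, p.2)) p.1

/-- Partial derivative in the second ("space") variable. -/
noncomputable def dXu (f : ℝ × ℝ → ℂ) (p : ℝ × ℝ) : ℂ := deriv (fun b => f (p.1, b)) p.2

/-! Adding and subtracting the two equations decouples them into `∂_t f = -s i E t f` and
`∂_x f = s i E x f`. Each is the scalar ODE `u' = c t u`, whose solutions are the multiples of
`exp (c t² / 2)` because `u · exp (-c t² / 2)` has zero derivative; integrating first along the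
`x`-axis and then in `t` gives the Gaussian phase. -/

lemma hasDerivAt_cexp_mul_sq_div_two (c : ℂ) (t : ℝ) :
    HasDerivAt (fun t : ℝ => cexp (c * t ^ 2 / 2)) (c * t * cexp (c * t ^ 2 / 2)) t := by
  have h : HasDerivAt (fun z : ℂ => c * z ^ 2 / 2) (c * t) t :=
    (((hasDerivAt_pow 2 (t : ℂ)).const_mul c).div_const 2).congr_deriv (by ring)
  simpa only [mul_comm] using h.cexp.comp_ofReal

lemma eq_mul_cexp_of_deriv_eq_mul (c : ℂ) {u : ℝ → ℂ} (hu : Differentiable ℝ u)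
    (h : ∀ t, deriv u t = c * t * u t) (t : ℝ) :
    u t = u 0 * cexp (c * t ^ 2 / 2) := by
  set g : ℝ → ℂ := fun t => u t * cexp (-c * t ^ 2 / 2)
  have hg : ∀ t, HasDerivAt g 0 t := by
    intro t
    have := (hu t).hasDerivAt.mul (hasDerivAt_cexp_mul_sq_div_two (-c) t)
    rw [h t] at this
    exact this.congr_deriv (by ring)
  have hg_const : g t = g 0 :=
    is_const_of_deriv_eq_zero (fun t => (hg t).differentiableAt) (fun t => (hg t).deriv) t 0
  calc u t = g t * cexp (c * t ^ 2 / 2) := by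
        rw [mul_assoc, ← Complex.exp_add, neg_mul, neg_div, neg_add_cancel, Complex.exp_zero, mul_one]
    _ = u 0 * cexp (c * t ^ 2 / 2) := by rw [hg_const]; simp [g]

lemma eq_mul_cexp_of_partialDeriv_eq_mul {f : ℝ × ℝ → ℂ} (hf : Differentiable ℝ f) (a b : ℂ)
    (hT : ∀ p, dTu f p = a * p.1 * f p) (hX : ∀ p, dXu f p = b * p.2 * f p) (p : ℝ × ℝ) :
    f p = f (0, 0) * cexp (a * p.1 ^ 2 / 2 + b * p.2 ^ 2 / 2) := by
  obtain ⟨t, x⟩ := p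
  have along_t := eq_mul_cexp_of_deriv_eq_mul a
    (hf.comp (differentiable_id.prodMk (differentiable_const x))) (fun t => hT (t, x)) t
  have along_x := eq_mul_cexp_of_deriv_eq_mul b
    (hf.comp ((differentiable_const 0).prodMk differentiable_id)) (fun x => hX (0, x)) x
  simp only [Function.comp_apply, id] at along_t along_x
  rw [along_t, along_x, Complex.exp_add]
  ring

theorem ground_state_unique_general (E s : ℝ)
    (f : ℝ × ℝ → ℂ) (hf : ContDiff ℝ 1 f)
    (h1 : ∀ p : ℝ × ℝ, dTu f p - dXu f p
      = -(s : ℂ) * Complex.I * (E : ℂ) * ((p.1 : ℂ) + (p.2 : ℂ)) * f p)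
    (h2 : ∀ p : ℝ × ℝ, dTu f p + dXu f p
      = -(s : ℂ) * Complex.I * (E : ℂ) * ((p.1 : ℂ) - (p.2 : ℂ)) * f p) :
    ∀ p : ℝ × ℝ, f p = f (0, 0) *
      Complex.exp (-(s : ℂ) * Complex.I * (E : ℂ) * ((p.1 : ℂ) ^ 2 - (p.2 : ℂ) ^ 2) / 2) := by
  have hT : ∀ p : ℝ × ℝ, dTu f p = -(s : ℂ) * I * E * p.1 * f p := fun p => by
    linear_combination (h1 p + h2 p) / 2
  have hX : ∀ p : ℝ × ℝ, dXu f p = (s : ℂ) * I * E * p.2 * f p := fun p => by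
    linear_combination (h2 p - h1 p) / 2
  intro p
  rw [eq_mul_cexp_of_partialDeriv_eq_mul (hf.differentiable one_ne_zero) _ _ hT hX p]
  ring_nf

/-- a continuously differentiable solution of the pair of
first-order equations `(∂_t − ∂_x)f = −s·iE(t+x)f` and
`(∂_t + ∂_x)f = −s·iE(t−x)f` is the Gaussian phase
`f(t,x) = f(0,0) e^{−s·iE(t²−x²)/2}`; in particular the simultaneous kernel of
the annihilation operators `a₁^{−s}, a₂^{−s}` is one-dimensional. -/
theorem ground_state_unique (E s : ℝ) (hE : 0 < E) (hs : s = 1 ∨ s = -1)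
    (f : ℝ × ℝ → ℂ) (hf : ContDiff ℝ 1 f)
    (h1 : ∀ p : ℝ × ℝ, dTu f p - dXu f p
      = -(s : ℂ) * Complex.I * (E : ℂ) * ((p.1 : ℂ) + (p.2 : ℂ)) * f p)
    (h2 : ∀ p : ℝ × ℝ, dTu f p + dXu f p
      = -(s : ℂ) * Complex.I * (E : ℂ) * ((p.1 : ℂ) - (p.2 : ℂ)) * f p) :
    ∀ p : ℝ × ℝ, f p = f (0, 0) *
      Complex.exp (-(s : ℂ) * Complex.I * (E : ℂ) * ((p.1 : ℂ) ^ 2 - (p.2 : ℂ) ^ 2) / 2) :=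
  ground_state_unique_general E s f hf h1 h2
end
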